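/- Let P: A → A be an idempotent linear filtration-preserving map on a complete filtered associative algebra A, with A_{1,−} := P(A_1) and A_{1,+} := P̃(A_1) where P̃ = id − P. Then C(x,y) = log(exp(x)exp(y)) restricts to a bijection C_−: A_{1,−} × A_{1,+} → A_1, with inverse D_P(a) = (P(χ(a)), P̃(χ(a))). -/

import Mathlib

/-! Write `C(x, y) = x + y + BCH(x, y)`. Since `exp` and `log` agree with `x ↦ 1 + x` and
`1 + w ↦ w` up to tails `∑ cₙ xⁿ⁺²`, `BCH` raises the filtration degree of differences: if
`x - x', y - y' ∈ F n` (all four in `F 1`), then `BCH(x, y) - BCH(x', y') ∈ F (n + 1)`.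
Hence the equation `b = a - BCH(P b, b - P b)`, solved by `χ a`, has at most one solution in
`F 1`: the difference of two solutions lies in every `F n`, and the filtration is Hausdorff.
For `(x, y)` in the domain, `x + y` solves it with `a = C(x, y)`, so `χ (C(x, y)) = x + y`;
that `C ∘ D` is the identity is the defining equation of `χ` itself. -/

open scoped BigOperators

noncomputable def expS (K : Type*) {A : Type*} [Field K] [CharZero K] [Ring A] [Algebra K A]
    [UniformSpace A] (a : A) : A :=
  ∑' n : ℕ, ((n.factorial : K)⁻¹) • a ^ n

noncomputable def logS (K : Type*) {A : Type*} [Field K] [CharZero K] [Ring A] [Algebra K A]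
    [UniformSpace A] (a : A) : A :=
  ∑' n : ℕ, (((-1 : K) ^ n) * ((n : K) + 1)⁻¹) • (a - 1) ^ (n + 1)

noncomputable def BCHs (K : Type*) {A : Type*} [Field K] [CharZero K] [Ring A] [Algebra K A]
    [UniformSpace A] (x y : A) : A :=
  logS K (expS K x * expS K y) - x - y

/-- A complete decreasing multiplicative filtration defining the topology of `A`. -/
def IsCompleteFiltration (K : Type*) {A : Type*} [Field K] [CharZero K] [Ring A] [Algebra K A]
    [UniformSpace A] (F : ℕ → Submodule K A) : Prop :=
  F 0 = ⊤ ∧ (∀ n, F (n + 1) ≤ F n) ∧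
    (∀ m n : ℕ, ∀ x ∈ F m, ∀ y ∈ F n, x * y ∈ F (m + n)) ∧
    (∀ n, IsOpen ((F n : Set A))) ∧
    (∀ U ∈ nhds (0 : A), ∃ n, ((F n : Set A)) ⊆ U)

variable {K : Type*} [Field K] [CharZero K] {A : Type*} [Ring A] [Algebra K A]
  [UniformSpace A] [CompleteSpace A] [T2Space A] [IsTopologicalRing A]
  [IsUniformAddGroup A]

section Filtration

variable {𝕜 R : Type*} [Field 𝕜] [CharZero 𝕜] [Ring R] [Algebra 𝕜 R] [UniformSpace R]
  {F : ℕ → Submodule 𝕜 R}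

namespace IsCompleteFiltration

theorem mem_zero (hF : IsCompleteFiltration 𝕜 F) (x : R) : x ∈ F 0 :=
  hF.1 ▸ Submodule.mem_top

theorem antitone (hF : IsCompleteFiltration 𝕜 F) : Antitone F :=
  antitone_nat_of_succ_le hF.2.1

theorem mul_mem (hF : IsCompleteFiltration 𝕜 F) {m n : ℕ} {x y : R} (hx : x ∈ F m)
    (hy : y ∈ F n) : x * y ∈ F (m + n) :=
  hF.2.2.1 m n x hx y hy

theorem pow_mem (hF : IsCompleteFiltration 𝕜 F) {x : R} (hx : x ∈ F 1) : ∀ k, x ^ k ∈ F k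
  | 0 => hF.mem_zero _
  | k + 1 => pow_succ x k ▸ hF.mul_mem (hF.pow_mem hx k) hx

theorem mul_sub_mul_mem (hF : IsCompleteFiltration 𝕜 F) {a a' b b' : R} {n k : ℕ}
    (ha : a - a' ∈ F n) (hb : b - b' ∈ F n) (ha' : a' ∈ F k) (hb' : b ∈ F k) :
    a * b - a' * b' ∈ F (n + k) := by
  have h : a * b - a' * b' = (a - a') * b + a' * (b - b') := by noncomm_ring
  rw [h]
  exact add_mem (hF.mul_mem ha hb') (Nat.add_comm k n ▸ hF.mul_mem ha' hb)

theorem pow_sub_pow_mem (hF : IsCompleteFiltration 𝕜 F) {x x' : R} (hx : x ∈ F 1)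
    (hx' : x' ∈ F 1) {n : ℕ} (hd : x - x' ∈ F n) : ∀ k, x ^ (k + 1) - x' ^ (k + 1) ∈ F (n + k)
  | 0 => by simpa using hd
  | k + 1 => by
    have h : x ^ (k + 2) - x' ^ (k + 2) =
        x * (x ^ (k + 1) - x' ^ (k + 1)) + (x - x') * x' ^ (k + 1) := by
      rw [mul_sub, sub_mul, ← pow_succ', ← pow_succ']
      abel
    rw [h]
    refine add_mem ?_ (hF.mul_mem hd (hF.pow_mem hx' (k + 1)))
    exact (by omega : 1 + (n + k) = n + (k + 1)) ▸ hF.mul_mem hx (hF.pow_sub_pow_mem hx hx' hd k)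

theorem summable [CompleteSpace R] [IsUniformAddGroup R] (hF : IsCompleteFiltration 𝕜 F)
    {f : ℕ → R} (h : ∀ n, f n ∈ F n) : Summable f := by
  refine summable_iff_vanishing.2 fun U hU => ?_
  obtain ⟨N, hN⟩ := hF.2.2.2.2 U hU
  refine ⟨Finset.range N, fun t ht => hN (Submodule.sum_mem _ fun i hi => hF.antitone ?_ (h i))⟩
  have := Finset.disjoint_left.1 ht hi
  rw [Finset.mem_range] at this
  omega

theorem tsum_mem [IsTopologicalAddGroup R] (hF : IsCompleteFiltration 𝕜 F) {f : ℕ → R}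
    {m : ℕ} (h : ∀ n, f n ∈ F m) : ∑' n, f n ∈ F m := by
  by_cases hs : Summable f
  · have hclosed : IsClosed (F m : Set R) :=
      AddSubgroup.isClosed_of_isOpen (F m).toAddSubgroup (hF.2.2.2.1 m)
    exact hclosed.mem_of_tendsto hs.hasSum.tendsto_sum_nat
      (Filter.Eventually.of_forall fun s => Submodule.sum_mem _ fun i _ => h i)
  · rw [tsum_eq_zero_of_not_summable hs]
    exact zero_mem _

theorem eq_of_forall_sub_mem [T1Space R] (hF : IsCompleteFiltration 𝕜 F) {a b : R}
    (h : ∀ n, a - b ∈ F n) : a = b := by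
  by_contra hne
  obtain ⟨n, hn⟩ := hF.2.2.2.2 _ (isOpen_compl_singleton.mem_nhds (sub_ne_zero.2 hne).symm)
  exact hn (h n) rfl

theorem eq_of_eq_sub_of_contracting [T1Space R] (hF : IsCompleteFiltration 𝕜 F) {f : R → R}
    (hf : ∀ n, ∀ b ∈ F 1, ∀ c ∈ F 1, b - c ∈ F n → f b - f c ∈ F (n + 1))
    {a b c : R} (hb1 : b ∈ F 1) (hc1 : c ∈ F 1) (hb : b = a - f b) (hc : c = a - f c) :
    b = c := by
  refine hF.eq_of_forall_sub_mem fun n => ?_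
  induction n with
  | zero => exact hF.mem_zero _
  | succ n ih =>
    have h : b - c = -(f b - f c) := by
      conv_lhs => rw [hb, hc]
      abel
    rw [h]
    exact neg_mem (hf n b hb1 c hc1 ih)

end IsCompleteFiltration

noncomputable def powTail (c : ℕ → 𝕜) (x : R) : R :=
  ∑' n, c n • x ^ (n + 2)

theorem logS_expS_mul_expS (x y : R) :
    logS 𝕜 (expS 𝕜 x * expS 𝕜 y) = x + y + BCHs 𝕜 x y := by
  rw [BCHs]
  abel

theorem expS_zero : expS 𝕜 (0 : R) = 1 := by
  rw [expS, tsum_eq_single 0 fun n hn => by simp [hn]]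
  simp

theorem logS_one : logS 𝕜 (1 : R) = 0 := by
  simp [logS]

variable [CompleteSpace R] [T2Space R] [IsUniformAddGroup R]

theorem powTail_sub_powTail_mem (hF : IsCompleteFiltration 𝕜 F) (c : ℕ → 𝕜) {x x' : R}
    (hx : x ∈ F 1) (hx' : x' ∈ F 1) {n : ℕ} (hd : x - x' ∈ F n) :
    powTail c x - powTail c x' ∈ F (n + 1) := by
  have hs : ∀ {z : R}, z ∈ F 1 → Summable fun k => c k • z ^ (k + 2) := fun hz =>
    hF.summable fun k => hF.antitone (by omega) (Submodule.smul_mem _ _ (hF.pow_mem hz (k + 2)))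
  rw [powTail, powTail, ← (hs hx).tsum_sub (hs hx')]
  refine hF.tsum_mem fun k => ?_
  rw [← smul_sub]
  exact Submodule.smul_mem _ _ (hF.antitone (by omega) (hF.pow_sub_pow_mem hx hx' hd (k + 1)))

theorem expS_eq_one_add_add_powTail (hF : IsCompleteFiltration 𝕜 F) {x : R} (hx : x ∈ F 1) :
    expS 𝕜 x = 1 + x + powTail (fun n => ((n + 2).factorial : 𝕜)⁻¹) x := by
  have hs : Summable fun n => ((n.factorial : 𝕜)⁻¹) • x ^ n :=
    hF.summable fun n => Submodule.smul_mem _ _ (hF.pow_mem hx n)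
  rw [expS, hs.tsum_eq_zero_add, ((summable_nat_add_iff 1).2 hs).tsum_eq_zero_add, powTail]
  simp [add_assoc]

theorem logS_one_add_eq_add_powTail (hF : IsCompleteFiltration 𝕜 F) {w : R} (hw : w ∈ F 1) :
    logS 𝕜 (1 + w) =
      w + powTail (fun n : ℕ => (-1 : 𝕜) ^ (n + 1) * (((n + 1 : ℕ) : 𝕜) + 1)⁻¹) w := by
  have hs : Summable fun n : ℕ => ((-1 : 𝕜) ^ n * ((n : 𝕜) + 1)⁻¹) • w ^ (n + 1) :=
    hF.summable fun n => hF.antitone (by omega) (Submodule.smul_mem _ _ (hF.pow_mem hw (n + 1)))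
  simp only [logS, add_sub_cancel_left]
  rw [hs.tsum_eq_zero_add, powTail]
  simp

theorem powTail_mem (hF : IsCompleteFiltration 𝕜 F) (c : ℕ → 𝕜) {x : R} (hx : x ∈ F 1) :
    powTail c x ∈ F 2 := by
  simpa [powTail] using powTail_sub_powTail_mem hF c hx (zero_mem _) (n := 1) (by simpa using hx)

theorem expS_sub_one_mem (hF : IsCompleteFiltration 𝕜 F) {x : R} (hx : x ∈ F 1) :
    expS 𝕜 x - 1 ∈ F 1 := by
  rw [expS_eq_one_add_add_powTail hF hx, add_assoc, add_sub_cancel_left]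
  exact add_mem hx (hF.antitone (by omega) (powTail_mem hF _ hx))

theorem expS_mul_expS_sub_one_mem (hF : IsCompleteFiltration 𝕜 F) {x y : R} (hx : x ∈ F 1)
    (hy : y ∈ F 1) : expS 𝕜 x * expS 𝕜 y - 1 ∈ F 1 := by
  have h : expS 𝕜 x * expS 𝕜 y - 1 =
      (expS 𝕜 x - 1) + (expS 𝕜 y - 1) + (expS 𝕜 x - 1) * (expS 𝕜 y - 1) := by noncomm_ring
  rw [h]
  exact add_mem (add_mem (expS_sub_one_mem hF hx) (expS_sub_one_mem hF hy))
    (hF.antitone (by omega) (hF.mul_mem (expS_sub_one_mem hF hx) (expS_sub_one_mem hF hy)))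

theorem expS_sub_expS_sub_sub_mem (hF : IsCompleteFiltration 𝕜 F) {x x' : R} (hx : x ∈ F 1)
    (hx' : x' ∈ F 1) {n : ℕ} (hd : x - x' ∈ F n) :
    expS 𝕜 x - expS 𝕜 x' - (x - x') ∈ F (n + 1) := by
  rw [expS_eq_one_add_add_powTail hF hx, expS_eq_one_add_add_powTail hF hx',
    show ∀ a b c d : R, 1 + a + c - (1 + b + d) - (a - b) = c - d by intros; abel]
  exact powTail_sub_powTail_mem hF _ hx hx' hd

theorem expS_sub_expS_mem (hF : IsCompleteFiltration 𝕜 F) {x x' : R} (hx : x ∈ F 1)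
    (hx' : x' ∈ F 1) {n : ℕ} (hd : x - x' ∈ F n) : expS 𝕜 x - expS 𝕜 x' ∈ F n := by
  simpa using add_mem (hF.antitone (by omega) (expS_sub_expS_sub_sub_mem hF hx hx' hd)) hd

theorem logS_one_add_sub_logS_one_add_sub_sub_mem (hF : IsCompleteFiltration 𝕜 F) {w w' : R}
    (hw : w ∈ F 1) (hw' : w' ∈ F 1) {n : ℕ} (hd : w - w' ∈ F n) :
    logS 𝕜 (1 + w) - logS 𝕜 (1 + w') - (w - w') ∈ F (n + 1) := by
  rw [logS_one_add_eq_add_powTail hF hw, logS_one_add_eq_add_powTail hF hw',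
    show ∀ a b c d : R, a + c - (b + d) - (a - b) = c - d by intros; abel]
  exact powTail_sub_powTail_mem hF _ hw hw' hd

theorem BCHs_sub_BCHs_mem (hF : IsCompleteFiltration 𝕜 F) {x x' y y' : R} (hx : x ∈ F 1)
    (hx' : x' ∈ F 1) (hy : y ∈ F 1) (hy' : y' ∈ F 1) {n : ℕ} (hdx : x - x' ∈ F n)
    (hdy : y - y' ∈ F n) : BCHs 𝕜 x y - BCHs 𝕜 x' y' ∈ F (n + 1) := by
  have hdw : (expS 𝕜 x * expS 𝕜 y - 1) - (expS 𝕜 x' * expS 𝕜 y' - 1) ∈ F n := by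
    rw [sub_sub_sub_cancel_right]
    exact hF.mul_sub_mul_mem (expS_sub_expS_mem hF hx hx' hdx) (expS_sub_expS_mem hF hy hy' hdy)
      (hF.mem_zero _) (hF.mem_zero _)
  have hlog := logS_one_add_sub_logS_one_add_sub_sub_mem hF (expS_mul_expS_sub_one_mem hF hx hy)
    (expS_mul_expS_sub_one_mem hF hx' hy') hdw
  rw [add_sub_cancel, add_sub_cancel] at hlog
  have hdu : (expS 𝕜 x - 1) - (expS 𝕜 x' - 1) ∈ F n := by
    rw [sub_sub_sub_cancel_right]
    exact expS_sub_expS_mem hF hx hx' hdx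
  have hdv : (expS 𝕜 y - 1) - (expS 𝕜 y' - 1) ∈ F n := by
    rw [sub_sub_sub_cancel_right]
    exact expS_sub_expS_mem hF hy hy' hdy
  have hprod := hF.mul_sub_mul_mem hdu hdv (expS_sub_one_mem hF hx') (expS_sub_one_mem hF hy)
  -- the first-order parts `x + y` cancel, leaving terms of degree at least `n + 1`
  have h : BCHs 𝕜 x y - BCHs 𝕜 x' y' =
      (logS 𝕜 (expS 𝕜 x * expS 𝕜 y) - logS 𝕜 (expS 𝕜 x' * expS 𝕜 y') -
          ((expS 𝕜 x * expS 𝕜 y - 1) - (expS 𝕜 x' * expS 𝕜 y' - 1))) +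
        (expS 𝕜 x - expS 𝕜 x' - (x - x')) + (expS 𝕜 y - expS 𝕜 y' - (y - y')) +
        ((expS 𝕜 x - 1) * (expS 𝕜 y - 1) - (expS 𝕜 x' - 1) * (expS 𝕜 y' - 1)) := by
    rw [BCHs, BCHs]
    noncomm_ring
  rw [h]
  exact add_mem (add_mem (add_mem hlog (expS_sub_expS_sub_sub_mem hF hx hx' hdx))
    (expS_sub_expS_sub_sub_mem hF hy hy' hdy)) hprod

theorem BCHs_mem (hF : IsCompleteFiltration 𝕜 F) {x y : R} (hx : x ∈ F 1) (hy : y ∈ F 1) :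
    BCHs 𝕜 x y ∈ F 2 := by
  have h := BCHs_sub_BCHs_mem hF hx (zero_mem _) hy (zero_mem _) (n := 1)
    (by simpa using hx) (by simpa using hy)
  simpa [BCHs, expS_zero, logS_one] using h

theorem BCHs_proj_sub_BCHs_proj_mem (hF : IsCompleteFiltration 𝕜 F) {P : R →ₗ[𝕜] R}
    (hP : ∀ n, ∀ x ∈ F n, P x ∈ F n) (n : ℕ) (b : R) (hb : b ∈ F 1) (c : R) (hc : c ∈ F 1)
    (hd : b - c ∈ F n) : BCHs 𝕜 (P b) (b - P b) - BCHs 𝕜 (P c) (c - P c) ∈ F (n + 1) := by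
  have hPd : P b - P c ∈ F n := map_sub P b c ▸ hP n _ hd
  refine BCHs_sub_BCHs_mem hF (hP 1 b hb) (hP 1 c hc) (sub_mem hb (hP 1 b hb))
    (sub_mem hc (hP 1 c hc)) hPd ?_
  rw [sub_sub_sub_comm]
  exact sub_mem hd hPd

theorem logS_expS_mul_expS_mem (hF : IsCompleteFiltration 𝕜 F) {x y : R} (hx : x ∈ F 1)
    (hy : y ∈ F 1) : logS 𝕜 (expS 𝕜 x * expS 𝕜 y) ∈ F 1 := by
  rw [logS_expS_mul_expS]
  exact add_mem (add_mem hx hy) (hF.antitone (by omega) (BCHs_mem hF hx hy))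

theorem apply_logS_expS_mul_expS_eq_add (hF : IsCompleteFiltration 𝕜 F) {P : R →ₗ[𝕜] R}
    (hP : ∀ n, ∀ x ∈ F n, P x ∈ F n) {χ : R → R} (hχmem : ∀ a ∈ F 1, χ a ∈ F 1)
    (hχ : ∀ a ∈ F 1, χ a = a - BCHs 𝕜 (P (χ a)) (χ a - P (χ a))) {x y : R} (hx : x ∈ F 1)
    (hy : y ∈ F 1) (hPx : P x = x) (hPy : P y = 0) :
    χ (logS 𝕜 (expS 𝕜 x * expS 𝕜 y)) = x + y := by
  have hC := logS_expS_mul_expS_mem hF hx hy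
  have hPxy : P (x + y) = x := by rw [map_add, hPx, hPy, add_zero]
  -- `x + y` solves the fixed-point equation defining `χ`, whose solution is unique
  refine hF.eq_of_eq_sub_of_contracting (BCHs_proj_sub_BCHs_proj_mem hF hP) (hχmem _ hC)
    (add_mem hx hy) (hχ _ hC) ?_
  rw [hPxy, add_sub_cancel_left, logS_expS_mul_expS, add_sub_cancel_right]

end Filtration

namespace LinearMap

variable {𝕜 M : Type*} [Ring 𝕜] [AddCommGroup M] [Module 𝕜 M] {P : M →ₗ[𝕜] M}
  {S : Submodule 𝕜 M}

theorem mem_and_apply_eq_self_of_mem_image (hPP : ∀ x, P (P x) = P x)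
    (hS : ∀ x ∈ S, P x ∈ S) {x : M} (hx : x ∈ P '' S) : x ∈ S ∧ P x = x := by
  obtain ⟨z, hz, rfl⟩ := hx
  exact ⟨hS z hz, hPP z⟩

theorem mem_and_apply_eq_zero_of_mem_image_sub (hPP : ∀ x, P (P x) = P x)
    (hS : ∀ x ∈ S, P x ∈ S) {x : M} (hx : x ∈ (fun z => z - P z) '' S) : x ∈ S ∧ P x = 0 := by
  obtain ⟨z, hz, rfl⟩ := hx
  exact ⟨sub_mem hz (hS z hz), by rw [map_sub, hPP, sub_self]⟩

end LinearMap

theorem stmt6 (F : ℕ → Submodule K A) (hF : IsCompleteFiltration K F)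
    (P : A →ₗ[K] A) (hP : ∀ n, ∀ x ∈ F n, P x ∈ F n)
    (χ : A → A) (hχmem : ∀ a ∈ F 1, χ a ∈ F 1)
    (hχ : ∀ a ∈ F 1, χ a = a - BCHs K (P (χ a)) (χ a - P (χ a)))
    (hPP : ∀ x : A, P (P x) = P x) :
    Set.BijOn (fun p : A × A => logS K (expS K p.1 * expS K p.2))
      (((⇑P '' (F 1 : Set A)) ×ˢ ((fun x => x - P x) '' (F 1 : Set A)))) ((F 1 : Set A)) ∧
    Set.InvOn (fun a => (P (χ a), χ a - P (χ a)))
      (fun p : A × A => logS K (expS K p.1 * expS K p.2))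
      (((⇑P '' (F 1 : Set A)) ×ˢ ((fun x => x - P x) '' (F 1 : Set A)))) ((F 1 : Set A)) := by
  refine ⟨Set.InvOn.bijOn ?inv ?mapsTo ?mapsTo_symm, ?inv⟩
  case inv =>
    refine ⟨?_, fun a ha => ?_⟩
    · rintro ⟨x, y⟩ ⟨hxS, hyS⟩
      obtain ⟨hx, hPx⟩ := LinearMap.mem_and_apply_eq_self_of_mem_image hPP (hP 1) hxS
      obtain ⟨hy, hPy⟩ := LinearMap.mem_and_apply_eq_zero_of_mem_image_sub hPP (hP 1) hyS
      have hPxy : P (x + y) = x := by rw [map_add, hPx, hPy, add_zero]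
      simp only [apply_logS_expS_mul_expS_eq_add hF hP hχmem hχ hx hy hPx hPy, hPxy,
        add_sub_cancel_left]
    · change logS K (expS K (P (χ a)) * expS K (χ a - P (χ a))) = a
      rw [logS_expS_mul_expS, add_sub_cancel]
      exact eq_sub_iff_add_eq.1 (hχ a ha)
  case mapsTo =>
    rintro ⟨_, _⟩ ⟨⟨x, hx, rfl⟩, ⟨y, hy, rfl⟩⟩
    exact logS_expS_mul_expS_mem hF (hP 1 x hx) (sub_mem hy (hP 1 y hy))
  case mapsTo_symm =>
    exact fun a ha => ⟨⟨χ a, hχmem a ha, rfl⟩, ⟨χ a, hχmem a ha, rfl⟩⟩
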